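/- With notation as in the abstract Kauffman state model: if moreover two specified elements d₁, d₂ ∈ S are excluded from the image of every admissible state (i.e., all injections κ : C → D \ {d₁, d₂}), then the spread of total δ-values satisfies max_κ Σ_c f(c,κ(c)) − min_κ Σ_c f(c,κ(c)) ≤ (1/2)(|S| − 2) = (1/2)|S| − 1. -/

import Mathlib

/-!
Off `S` the value `f c d` depends only on `d`, and both states have the same image, so the
contributions of the domains outside `S` cancel in the difference. What remains are the sums
over the `c` with `κ c ∈ S`, resp. `κ' c ∈ S`: each term has absolute value `1/4`, and there
are at most `|S| - 2` such `c`, because the state is injective and misses `d₁` and `d₂`.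
-/

open Finset

section
variable {C D : Type*}

lemma exists_forall_notMem_eq {S : Finset D} {f : C → D → ℝ}
    (hf : ∀ c c' d, d ∉ S → f c d = f c' d) : ∃ g : D → ℝ, ∀ c d, d ∉ S → f c d = g d := by
  rcases isEmpty_or_nonempty C with hC | ⟨⟨c₀⟩⟩
  · exact ⟨0, fun c => isEmptyElim c⟩
  · exact ⟨f c₀, fun c d hd => hf c c₀ d hd⟩

variable [Fintype C] [DecidableEq D]

lemma sum_comp_eq_sum_filter_mem_add_sum_image_sdiff {S : Finset D} {f : C → D → ℝ}
    {g : D → ℝ} (hg : ∀ c d, d ∉ S → f c d = g d) {μ : C → D} (hμ : Function.Injective μ) :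
    ∑ c, f c (μ c) = ∑ c ∈ univ.filter (μ · ∈ S), f c (μ c) + ∑ d ∈ univ.image μ \ S, g d := by
  rw [← sum_filter_add_sum_filter_not univ (μ · ∈ S), sdiff_eq_filter, filter_image,
    sum_image hμ.injOn]
  exact congrArg _ (sum_congr rfl fun c hc => hg c _ (mem_filter.1 hc).2)

lemma card_filter_mem_add_card_le {S T : Finset D} (hTS : T ⊆ S) {μ : C → D}
    (hμ : Function.Injective μ) (hT : ∀ c, μ c ∉ T) :
    #(univ.filter (μ · ∈ S)) + #T ≤ #S := by
  rw [← card_sdiff_add_card_eq_card hTS]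
  gcongr
  exact card_le_card_of_injOn μ (fun c hc => mem_sdiff.2 ⟨(mem_filter.1 hc).2, hT c⟩) hμ.injOn

end

lemma Finset.abs_sum_le_card_mul {ι : Type*} {s : Finset ι} {u : ι → ℝ} {a : ℝ}
    (hu : ∀ i ∈ s, |u i| ≤ a) : |∑ i ∈ s, u i| ≤ #s * a :=
  (abs_sum_le_sum_abs _ _).trans <| by simpa using sum_le_card_nsmul s _ a hu

theorem kauffman_delta_spread_marked_general
    {C D : Type*} [Fintype C]
    (S : Finset D) (d₁ d₂ : D)
    (hd₁ : d₁ ∈ S) (hd₂ : d₂ ∈ S) (hne : d₁ ≠ d₂)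
    (f : C → D → ℝ)
    (hvals : ∀ c d, f c d = -1/4 ∨ f c d = 1/4)
    (hgood : ∀ c c' d, d ∉ S → f c d = f c' d)
    (κ κ' : C → D)
    (hκ : Function.Injective κ) (hκ' : Function.Injective κ')
    (hκd : ∀ c, κ c ≠ d₁ ∧ κ c ≠ d₂)
    (hκ'd : ∀ c, κ' c ≠ d₁ ∧ κ' c ≠ d₂)
    (hrange : Set.range κ = Set.range κ') :
    (∑ c, f c (κ c)) - ∑ c, f c (κ' c) ≤ (1/2) * (S.card : ℝ) - 1 := by
  classical
  obtain ⟨g, hg⟩ := exists_forall_notMem_eq hgood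
  have himage : univ.image κ = univ.image κ' := by
    rw [← coe_inj, coe_image, coe_image, coe_univ, Set.image_univ, Set.image_univ, hrange]
  have hpair : {d₁, d₂} ⊆ S := insert_subset hd₁ (singleton_subset_iff.2 hd₂)
  have hcard := card_filter_mem_add_card_le hpair hκ (by simpa using hκd)
  have hcard' := card_filter_mem_add_card_le hpair hκ' (by simpa using hκ'd)
  rw [card_pair hne] at hcard hcard'
  have habs : ∀ c d, |f c d| ≤ 1/4 := fun c d => by
    rcases hvals c d with h | h <;> norm_num [h]
  have hbad := abs_sum_le_card_mul (s := univ.filter (κ · ∈ S)) fun c _ => habs c (κ c)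
  have hbad' := abs_sum_le_card_mul (s := univ.filter (κ' · ∈ S)) fun c _ => habs c (κ' c)
  rw [sum_comp_eq_sum_filter_mem_add_sum_image_sdiff hg hκ,
    sum_comp_eq_sum_filter_mem_add_sum_image_sdiff hg hκ', himage]
  have hS : (#(univ.filter (κ · ∈ S)) : ℝ) + 2 ≤ #S := by exact_mod_cast hcard
  have hS' : (#(univ.filter (κ' · ∈ S)) : ℝ) + 2 ≤ #S := by exact_mod_cast hcard'
  linarith [(abs_le.1 hbad).2, (abs_le.1 hbad').1]

/-- Abstract Kauffman-state model with a marked point on a bad edge: two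
distinguished bad domains `d₁ ≠ d₂` in `S` are excluded from the image of
every admissible state.  Then the spread of total δ-values over admissible
injective states is at most `(|S| - 2)/2 = |S|/2 - 1`. -/
theorem kauffman_delta_spread_marked
    {C D : Type*} [Fintype C] [DecidableEq D]
    (S : Finset D) (d₁ d₂ : D)
    (hd₁ : d₁ ∈ S) (hd₂ : d₂ ∈ S) (hne : d₁ ≠ d₂)
    (f : C → D → ℝ)
    (hvals : ∀ c d, f c d = -1/4 ∨ f c d = 1/4)
    (hgood : ∀ c c' d, d ∉ S → f c d = f c' d)
    (κ κ' : C → D)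
    (hκ : Function.Injective κ) (hκ' : Function.Injective κ')
    (hκd : ∀ c, κ c ≠ d₁ ∧ κ c ≠ d₂)
    (hκ'd : ∀ c, κ' c ≠ d₁ ∧ κ' c ≠ d₂)
    (hrange : Set.range κ = Set.range κ') :
    (∑ c, f c (κ c)) - ∑ c, f c (κ' c) ≤ (1/2) * (S.card : ℝ) - 1 :=
  kauffman_delta_spread_marked_general S d₁ d₂ hd₁ hd₂ hne f hvals hgood κ κ' hκ hκ' hκd hκ'd hrange
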